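/- Let ϖ₁, ϖ₂ > 0 and set 𝖯 := ϖ₁ℤ × ϖ₂ℤ ⊂ ℝ². For (x₁,x₂) ∈ ℝ² and j₁, j₂ ∈ {0,1} define ϑ[j₁,j₂](x₁,x₂) := ϑ_{ϖ₁}[j₁](x₁) + ϑ_{ϖ₂}[j₂](x₂), and define φ : ℝ² → ℝ³ by φ(x) := ( ϑ[1,0](x) − ϑ[0,0](x), ϑ[0,1](x) − ϑ[0,0](x), ϑ[1,1](x) − ϑ[0,0](x) ). Then: (1) each ϑ_{ϖᵢ}[j] is an even function on ℝ; (2) φ(x₁, −x₂) = φ(x₁, x₂) for all (x₁,x₂) ∈ ℝ²; (3) the induced map on the tropical Kummer surface (ℝ²/𝖯)/⟨x ∼ −x⟩ is not injective: the classes of (ϖ₁/4, ϖ₂/4) and (ϖ₁/4, −ϖ₂/4) are distinct in (ℝ²/𝖯)/⟨x ∼ −x⟩ but have the same image under φ. (Thus for a principally polarized tropical abelian surface of product type, the map given by tropical theta functions of second order is never injective on the tropical Kummer surface.) -/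
import Mathlib


/-!
STATEMENT 11: For the product-type lattice `𝖯 = ϖ₁ℤ × ϖ₂ℤ` and the second-order tropical
theta functions `ϑ[j₁,j₂](x₁,x₂) = ϑ_{ϖ₁}[j₁](x₁) + ϑ_{ϖ₂}[j₂](x₂)`, with
`φ = (ϑ[1,0] − ϑ[0,0], ϑ[0,1] − ϑ[0,0], ϑ[1,1] − ϑ[0,0])`:
(1) each `ϑ_{ϖᵢ}[j]` is even; (2) `φ(x₁, −x₂) = φ(x₁, x₂)`; (3) the induced map on the
tropical Kummer surface `(ℝ²/𝖯)/⟨x ∼ −x⟩` is not injective: the classes of `(ϖ₁/4, ϖ₂/4)`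
and `(ϖ₁/4, −ϖ₂/4)` are distinct but have the same image under `φ`.
-/

noncomputable section

/-- The second-order tropical theta function of the principally polarized tropical
elliptic curve `(ℝ/ϖℤ, xy/ϖ)`: `ϑ_ϖ[j](x) = inf_{k ∈ ℤ} (2x(k + j/2) + ϖ(k + j/2)²)`. -/
def theta1 (ϖ j x : ℝ) : ℝ :=
  sInf {t : ℝ | ∃ k : ℤ, t = 2 * x * ((k : ℝ) + j / 2) + ϖ * ((k : ℝ) + j / 2) ^ 2}

/-- The product theta function `ϑ[j₁,j₂](x₁,x₂) = ϑ_{ϖ₁}[j₁](x₁) + ϑ_{ϖ₂}[j₂](x₂)`. -/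
def thetaProd (ϖ₁ ϖ₂ j₁ j₂ : ℝ) (x : ℝ × ℝ) : ℝ :=
  theta1 ϖ₁ j₁ x.1 + theta1 ϖ₂ j₂ x.2

/-- The map `φ = (ϑ[1,0] − ϑ[0,0], ϑ[0,1] − ϑ[0,0], ϑ[1,1] − ϑ[0,0]) : ℝ² → ℝ³`. -/
def phiProd (ϖ₁ ϖ₂ : ℝ) (x : ℝ × ℝ) : ℝ × ℝ × ℝ :=
  (thetaProd ϖ₁ ϖ₂ 1 0 x - thetaProd ϖ₁ ϖ₂ 0 0 x,
   thetaProd ϖ₁ ϖ₂ 0 1 x - thetaProd ϖ₁ ϖ₂ 0 0 x,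
   thetaProd ϖ₁ ϖ₂ 1 1 x - thetaProd ϖ₁ ϖ₂ 0 0 x)

/-- The product lattice `ϖ₁ℤ × ϖ₂ℤ` as a subset of `ℝ × ℝ`. -/
def latProd (ϖ₁ ϖ₂ : ℝ) : Set (ℝ × ℝ) :=
  {p | ∃ m n : ℤ, p = ((m : ℝ) * ϖ₁, (n : ℝ) * ϖ₂)}


lemma theta1_even_int (ϖ x : ℝ) (m : ℤ) : theta1 ϖ (m : ℝ) (-x) = theta1 ϖ (m : ℝ) x := by
  unfold theta1
  congr 1
  ext t
  constructor
  · rintro ⟨k, rfl⟩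
    exact ⟨-k - m, by push_cast; ring⟩
  · rintro ⟨k, rfl⟩
    exact ⟨-k - m, by push_cast; ring⟩

lemma theta1_even0 (ϖ x : ℝ) : theta1 ϖ 0 (-x) = theta1 ϖ 0 x := by
  have := theta1_even_int ϖ x 0; simpa using this

lemma theta1_even1 (ϖ x : ℝ) : theta1 ϖ 1 (-x) = theta1 ϖ 1 x := by
  have := theta1_even_int ϖ x 1; simpa using this

theorem product_type_theta_map_not_injective
    (ϖ₁ ϖ₂ : ℝ) (h₁ : 0 < ϖ₁) (h₂ : 0 < ϖ₂) :
    (∀ ϖ ∈ ({ϖ₁, ϖ₂} : Set ℝ), ∀ j ∈ ({0, 1} : Set ℝ), ∀ x : ℝ,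
        theta1 ϖ j (-x) = theta1 ϖ j x) ∧
    (∀ x₁ x₂ : ℝ, phiProd ϖ₁ ϖ₂ (x₁, -x₂) = phiProd ϖ₁ ϖ₂ (x₁, x₂)) ∧
    (¬ ∃ p ∈ latProd ϖ₁ ϖ₂,
        ((ϖ₁ / 4, -ϖ₂ / 4) : ℝ × ℝ) = (ϖ₁ / 4, ϖ₂ / 4) + p ∨
        ((ϖ₁ / 4, -ϖ₂ / 4) : ℝ × ℝ) = -((ϖ₁ / 4, ϖ₂ / 4) : ℝ × ℝ) + p) ∧
    phiProd ϖ₁ ϖ₂ (ϖ₁ / 4, ϖ₂ / 4) = phiProd ϖ₁ ϖ₂ (ϖ₁ / 4, -ϖ₂ / 4) :=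
  by
  have heven : ∀ ϖ x : ℝ, ∀ j ∈ ({0, 1} : Set ℝ), theta1 ϖ j (-x) = theta1 ϖ j x := by
    rintro ϖ x j (rfl | rfl)
    · exact theta1_even0 ϖ x
    · exact theta1_even1 ϖ x
  have hphi : ∀ x₁ x₂ : ℝ, phiProd ϖ₁ ϖ₂ (x₁, -x₂) = phiProd ϖ₁ ϖ₂ (x₁, x₂) := by
    intro x₁ x₂
    simp only [phiProd, thetaProd, theta1_even0, theta1_even1]
  refine ⟨fun ϖ _ j hj x => heven ϖ x j hj, hphi, ?_, ?_⟩
  · rintro ⟨p, ⟨m, n, rfl⟩, h | h⟩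
    · have h2 : -ϖ₂ / 4 = ϖ₂ / 4 + (n : ℝ) * ϖ₂ := congrArg Prod.snd h
      have hn : (n : ℝ) * 2 = -1 := by
        have hne : ϖ₂ ≠ 0 := ne_of_gt h₂
        field_simp at h2
        nlinarith [h2]
      have : (n : ℝ) * 2 = ((n * 2 : ℤ) : ℝ) := by push_cast; ring
      rw [this] at hn
      have : (n * 2 : ℤ) = -1 := by exact_mod_cast hn
      omega
    · have h1 : ϖ₁ / 4 = -(ϖ₁ / 4) + (m : ℝ) * ϖ₁ := congrArg Prod.fst h
      have hm : (m : ℝ) * 2 = 1 := by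
        have hne : ϖ₁ ≠ 0 := ne_of_gt h₁
        field_simp at h1
        nlinarith [h1]
      have : (m : ℝ) * 2 = ((m * 2 : ℤ) : ℝ) := by push_cast; ring
      rw [this] at hm
      have : (m * 2 : ℤ) = 1 := by exact_mod_cast hm
      omega
  · simpa [neg_div] using (hphi (ϖ₁ / 4) (ϖ₂ / 4)).symm

end
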